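/- Let s > 0, 1 ≤ p < ∞, and define τ, q by 1/τ = 1/p + s/d, 1/q = 1 + s/d. Let f have wavelet coefficients (f_I)_{I∈D}, with Triebel–Lizorkin seminorm |f|_{F^s_{τ,q}} = ‖M_{s,q}f‖_{L^τ} finite, where M_{s,q}f(x) = (Σ_{I∈D} |I|^{-sq/d}|f_I|^q χ_I(x))^{1/q}. Define partial maximal constants m_{s,q,I} = (Σ_{I ⊆ I'} |I'|^{-sq/d}|f_{I'}|^q)^{1/q} and costs c_I = |f|_{F^s_{τ,q}}^{-τ} m_{s,q,I}^{τ-q} |f_I|^q |I|^{1 - qs/d} N. Then Σ_{I∈D} c_I ≤ N. -/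

import Mathlib

/-!
Since `|I| = ∫ χ_I`, the sum `Σ_I m_{s,q,I}^{τ-q} |f_I|^q |I|^{1-qs/d}` is the integral of
`Σ_I m_{s,q,I}^{τ-q} |I|^{-sq/d} |f_I|^q χ_I`. On `I` we have `m_{s,q,I} ≤ M_{s,q}f` and `τ ≥ q`,
so this integrand is at most `M_{s,q}f^{τ-q} · M_{s,q}f^q = M_{s,q}f^τ`. Hence the sum is at most
`|f|_{F^s_{τ,q}}^τ`, which the normalising factor `|f|_{F^s_{τ,q}}^{-τ}` cancels.
-/

open MeasureTheory
open scoped ENNReal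

/-- The dyadic cube `2^j(m + [0,1]^d)` in `ℝ^d`. -/
def dyadicCube (d : ℕ) (j : ℤ) (m : Fin d → ℤ) : Set (EuclideanSpace ℝ (Fin d)) :=
  {x | ∀ i, (2:ℝ) ^ j * (m i : ℝ) ≤ x i ∧ x i ≤ (2:ℝ) ^ j * ((m i : ℝ) + 1)}

/-- The volume `|I| = 2^{jd}` of a dyadic cube of level `j`, as an extended real. -/
noncomputable def dyadicVol (d : ℕ) (I : ℤ × (Fin d → ℤ)) : ℝ≥0∞ :=
  (2 : ℝ≥0∞) ^ (I.1 * (d : ℤ))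

/-- The square-function-type maximal function
`M_{s,q}f(x) = (Σ_{I∈D} |I|^{-sq/d} |f_I|^q χ_I(x))^{1/q}`. -/
noncomputable def sqMaxFn (d : ℕ) (s q : ℝ) (f : ℤ × (Fin d → ℤ) → ℝ)
    (x : EuclideanSpace ℝ (Fin d)) : ℝ≥0∞ :=
  (∑' I : ℤ × (Fin d → ℤ), (dyadicVol d I) ^ (-(s * q) / d) * ENNReal.ofReal |f I| ^ q *
      (dyadicCube d I.1 I.2).indicator (fun _ => (1 : ℝ≥0∞)) x) ^ (1 / q)

/-- The partial maximal constant `m_{s,q,I} = (Σ_{I ⊆ I'} |I'|^{-sq/d}|f_{I'}|^q)^{1/q}`. -/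
noncomputable def partialMaxConst (d : ℕ) (s q : ℝ) (f : ℤ × (Fin d → ℤ) → ℝ)
    (I : ℤ × (Fin d → ℤ)) : ℝ≥0∞ :=
  (∑' I' : {p : ℤ × (Fin d → ℤ) // dyadicCube d I.1 I.2 ⊆ dyadicCube d p.1 p.2},
      (dyadicVol d (I' : ℤ × (Fin d → ℤ))) ^ (-(s * q) / d) *
        ENNReal.ofReal |f (I' : ℤ × (Fin d → ℤ))| ^ q) ^ (1 / q)

lemma dyadicCube_eq_preimage_Icc (d : ℕ) (j : ℤ) (m : Fin d → ℤ) :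
    dyadicCube d j m = WithLp.ofLp ⁻¹'
      Set.Icc (fun i => (2:ℝ) ^ j * m i) (fun i => (2:ℝ) ^ j * (m i + 1)) := by
  ext x
  simp [dyadicCube, Pi.le_def, forall_and]

lemma measurableSet_dyadicCube (d : ℕ) (j : ℤ) (m : Fin d → ℤ) :
    MeasurableSet (dyadicCube d j m) := by
  rw [dyadicCube_eq_preimage_Icc]
  exact measurableSet_Icc.preimage (PiLp.volume_preserving_ofLp _).measurable

lemma volume_dyadicCube (d : ℕ) (I : ℤ × (Fin d → ℤ)) :
    volume (dyadicCube d I.1 I.2) = dyadicVol d I := by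
  have hside : ENNReal.ofReal ((2:ℝ) ^ I.1) = (2:ℝ≥0∞) ^ (I.1 : ℝ) := by
    rw [← Real.rpow_intCast, ← ENNReal.ofReal_rpow_of_pos two_pos, ENNReal.ofReal_ofNat]
  rw [dyadicCube_eq_preimage_Icc, (PiLp.volume_preserving_ofLp _).measure_preimage
    measurableSet_Icc.nullMeasurableSet, Real.volume_Icc_pi]
  simp only [mul_add, mul_one, add_sub_cancel_left, hside, Finset.prod_const, Finset.card_univ,
    Fintype.card_fin, dyadicVol]
  rw [← ENNReal.rpow_natCast, ← ENNReal.rpow_mul, ← ENNReal.rpow_intCast]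
  push_cast
  rfl

lemma dyadicVol_ne_zero (d : ℕ) (I : ℤ × (Fin d → ℤ)) : dyadicVol d I ≠ 0 :=
  (ENNReal.zpow_pos two_ne_zero ENNReal.ofNat_ne_top _).ne'

lemma dyadicVol_ne_top (d : ℕ) (I : ℤ × (Fin d → ℤ)) : dyadicVol d I ≠ ∞ :=
  (ENNReal.zpow_lt_top two_ne_zero ENNReal.ofNat_ne_top _).ne

section MaximalFunction

variable {d : ℕ} {s q : ℝ} (f : ℤ × (Fin d → ℤ) → ℝ)

lemma sqMaxFn_rpow (hq : q ≠ 0) (x : EuclideanSpace ℝ (Fin d)) :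
    sqMaxFn d s q f x ^ q = ∑' I : ℤ × (Fin d → ℤ),
      dyadicVol d I ^ (-(s * q) / d) * ENNReal.ofReal |f I| ^ q *
        (dyadicCube d I.1 I.2).indicator (fun _ => 1) x := by
  rw [sqMaxFn, ← ENNReal.rpow_mul, one_div_mul_cancel hq, ENNReal.rpow_one]

lemma partialMaxConst_le_sqMaxFn (hq : 0 ≤ q) {I : ℤ × (Fin d → ℤ)}
    {x : EuclideanSpace ℝ (Fin d)} (hx : x ∈ dyadicCube d I.1 I.2) :
    partialMaxConst d s q f I ≤ sqMaxFn d s q f x := by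
  refine ENNReal.rpow_le_rpow ?_ (one_div_nonneg.2 hq)
  convert ENNReal.tsum_comp_le_tsum_of_injective Subtype.val_injective _ using 2
  ext I'
  rw [Set.indicator_of_mem (I'.2 hx), mul_one]

lemma tsum_partialMaxConst_rpow_mul_indicator_le {τ : ℝ} (hq : 0 < q) (hqτ : q ≤ τ)
    (x : EuclideanSpace ℝ (Fin d)) :
    ∑' I : ℤ × (Fin d → ℤ), partialMaxConst d s q f I ^ (τ - q) *
        (dyadicVol d I ^ (-(s * q) / d) * ENNReal.ofReal |f I| ^ q *
          (dyadicCube d I.1 I.2).indicator (fun _ => 1) x)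
      ≤ sqMaxFn d s q f x ^ τ := calc
  _ ≤ ∑' I : ℤ × (Fin d → ℤ), sqMaxFn d s q f x ^ (τ - q) *
        (dyadicVol d I ^ (-(s * q) / d) * ENNReal.ofReal |f I| ^ q *
          (dyadicCube d I.1 I.2).indicator (fun _ => 1) x) := by
    refine ENNReal.tsum_le_tsum fun I => ?_
    by_cases hx : x ∈ dyadicCube d I.1 I.2
    · gcongr
      exact partialMaxConst_le_sqMaxFn f hq.le hx
    · simp [hx]
  _ = sqMaxFn d s q f x ^ (τ - q) * sqMaxFn d s q f x ^ q := by
    rw [ENNReal.tsum_mul_left, sqMaxFn_rpow f hq.ne']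
  _ = sqMaxFn d s q f x ^ τ := by
    rw [← ENNReal.rpow_add_of_nonneg _ _ (sub_nonneg.2 hqτ) hq.le, sub_add_cancel]

lemma tsum_partialMaxConst_rpow_mul_le_lintegral {τ : ℝ} (hq : 0 < q) (hqτ : q ≤ τ) :
    ∑' I : ℤ × (Fin d → ℤ), partialMaxConst d s q f I ^ (τ - q) *
        ENNReal.ofReal |f I| ^ q * dyadicVol d I ^ (1 - q * s / d)
      ≤ ∫⁻ x, sqMaxFn d s q f x ^ τ := calc
  _ = ∑' I : ℤ × (Fin d → ℤ), ∫⁻ x, partialMaxConst d s q f I ^ (τ - q) *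
        (dyadicVol d I ^ (-(s * q) / d) * ENNReal.ofReal |f I| ^ q *
          (dyadicCube d I.1 I.2).indicator (fun _ => 1) x) := by
    refine tsum_congr fun I => ?_
    have hχ : Measurable ((dyadicCube d I.1 I.2).indicator fun _ => (1 : ℝ≥0∞)) :=
      measurable_const.indicator (measurableSet_dyadicCube _ _ _)
    rw [lintegral_const_mul _ (hχ.const_mul _), lintegral_const_mul _ hχ,
      lintegral_indicator_const (measurableSet_dyadicCube _ _ _), one_mul, volume_dyadicCube,
      show 1 - q * s / d = -(s * q) / d + 1 by ring,
      ENNReal.rpow_add _ _ (dyadicVol_ne_zero d I) (dyadicVol_ne_top d I), ENNReal.rpow_one]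
    ring
  _ = ∫⁻ x, ∑' I : ℤ × (Fin d → ℤ), partialMaxConst d s q f I ^ (τ - q) *
        (dyadicVol d I ^ (-(s * q) / d) * ENNReal.ofReal |f I| ^ q *
          (dyadicCube d I.1 I.2).indicator (fun _ => 1) x) :=
    (lintegral_tsum fun I => by
      fun_prop (disch := exact measurableSet_dyadicCube _ _ _)).symm
  _ ≤ ∫⁻ x, sqMaxFn d s q f x ^ τ :=
    lintegral_mono (tsum_partialMaxConst_rpow_mul_indicator_le f hq hqτ)

end MaximalFunction

lemma pos_and_le_of_one_div_eq_add {a p τ q : ℝ} (ha : 0 ≤ a) (hp : 1 ≤ p)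
    (hτ : 1 / τ = 1 / p + a) (hq : 1 / q = 1 + a) : 0 < q ∧ q ≤ τ := by
  have hq0 : 0 < q := one_div_pos.1 (by rw [hq]; positivity)
  have hτ0 : 0 < τ := one_div_pos.1 (by rw [hτ]; positivity)
  refine ⟨hq0, le_of_one_div_le_one_div hτ0 ?_⟩
  rw [hτ, hq]
  gcongr
  exact (div_le_one (by linarith)).2 hp

theorem triebel_lizorkin_cost_sum_general (d : ℕ) (s p τ q : ℝ)
    (hs : 0 < s) (hp : 1 ≤ p) (hτ : 1 / τ = 1 / p + s / d) (hq : 1 / q = 1 + s / d)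
    (f : ℤ × (Fin d → ℤ) → ℝ) (N : ℝ≥0∞) :
    (∑' I : ℤ × (Fin d → ℤ),
        ((∫⁻ x, (sqMaxFn d s q f x) ^ τ) ^ (1 / τ)) ^ (-τ) *
          (partialMaxConst d s q f I) ^ (τ - q) *
          ENNReal.ofReal |f I| ^ q * (dyadicVol d I) ^ (1 - q * s / d) * N)
      ≤ N := by
  obtain ⟨hq0, hqτ⟩ := pos_and_le_of_one_div_eq_add (by positivity) hp hτ hq
  set L := (∫⁻ x, sqMaxFn d s q f x ^ τ) ^ (1 / τ)
  have hLτ : L ^ τ = ∫⁻ x, sqMaxFn d s q f x ^ τ := by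
    rw [← ENNReal.rpow_mul, one_div_mul_cancel (hq0.trans_le hqτ).ne', ENNReal.rpow_one]
  calc _ = L ^ (-τ) * (∑' I : ℤ × (Fin d → ℤ), partialMaxConst d s q f I ^ (τ - q) *
          ENNReal.ofReal |f I| ^ q * dyadicVol d I ^ (1 - q * s / d)) * N := by
        rw [← ENNReal.tsum_mul_left, ← ENNReal.tsum_mul_right]
        simp only [mul_assoc]
    _ ≤ (L ^ τ)⁻¹ * L ^ τ * N := by
        rw [ENNReal.rpow_neg, hLτ]
        gcongr
        exact tsum_partialMaxConst_rpow_mul_le_lintegral f hq0 hqτ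
    _ ≤ N := mul_le_of_le_one_left' (ENNReal.inv_mul_le_one _)

/-- The Triebel–Lizorkin cost distribution
`c_I = |f|_{F^s_{τ,q}}^{-τ} m_{s,q,I}^{τ-q} |f_I|^q |I|^{1-qs/d} N` satisfies
`Σ_{I∈D} c_I ≤ N`, where `|f|_{F^s_{τ,q}} = ‖M_{s,q}f‖_{L^τ}`, `1/τ = 1/p + s/d`,
`1/q = 1 + s/d`. -/
theorem triebel_lizorkin_cost_sum (d : ℕ) (hd : 1 ≤ d) (s p τ q : ℝ)
    (hs : 0 < s) (hp : 1 ≤ p) (hτ : 1 / τ = 1 / p + s / d) (hq : 1 / q = 1 + s / d)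
    (f : ℤ × (Fin d → ℤ) → ℝ) (N : ℝ≥0∞)
    (hfin : (∫⁻ x, (sqMaxFn d s q f x) ^ τ) ^ (1 / τ) ≠ ∞) :
    (∑' I : ℤ × (Fin d → ℤ),
        ((∫⁻ x, (sqMaxFn d s q f x) ^ τ) ^ (1 / τ)) ^ (-τ) *
          (partialMaxConst d s q f I) ^ (τ - q) *
          ENNReal.ofReal |f I| ^ q * (dyadicVol d I) ^ (1 - q * s / d) * N)
      ≤ N :=
  triebel_lizorkin_cost_sum_general d s p τ q hs hp hτ hq f N
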